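/- If G is a connected finite simple graph of order n ≥ 2, then 2·y_G ≤ n + n_2(G) + 2·n_1(G) − 2 and y_G ≤ n, where n_i(G) denotes the number of vertices of degree i in G (i.e., y_G ≤ min{(n + n_2(G) + 2·n_1(G))/2 − 1, n}). -/

import Mathlib

open SimpleGraph

/-- The number of connected components of a graph. -/
noncomputable def numComp {V : Type*} (G : SimpleGraph V) : ℕ :=
  Nat.card G.ConnectedComponent

/-- `y_G(A) = 2 c(G - A) - |A| - 1`. -/
noncomputable def yVal {V : Type*} (G : SimpleGraph V) (A : Set (Sym2 V)) : ℤ :=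
  2 * (numComp (G.deleteEdges A) : ℤ) - (A.ncard : ℤ) - 1

/-- `y_G = max_{A ⊆ E(G)} y_G(A)`. -/
noncomputable def yMax {V : Type*} (G : SimpleGraph V) : ℤ :=
  sSup { y : ℤ | ∃ A ⊆ G.edgeSet, yVal G A = y }

/-!
Deleting one edge creates at most one new component, so `c(G - A) ≤ 1 + |A|` for connected `G`,
whence `y_G(A) ≤ c(G - A) ≤ n`.

For the other bound, give each vertex `v` the weight `1 + [d(v) = 2] + 2 [d(v) = 1] + a(v)`, where
`a(v)` is the number of edges of `A` at `v`; the weights sum to `n + n₂ + 2 n₁ + 2 |A|`. As `G` has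
no isolated vertex, each weight is at least `max 1 (4 - d_{G-A}(v))`, and in a component of `G - A`
with `k` vertices all `(G - A)`-degrees are below `k`, so the component carries weight at least
`max k (k (5 - k)) ≥ 4`. Hence `4 c(G - A) ≤ n + n₂ + 2 n₁ + 2 |A|`, i.e.
`2 y_G(A) ≤ n + n₂ + 2 n₁ - 2`. Both bounds pass to `y_G`, a maximum over finitely many `A`.
-/

open Finset

namespace SimpleGraph

variable {V : Type*}

lemma Reachable.deleteEdges_singleton_or {G : SimpleGraph V} {x y : V} (h : G.Reachable x y)
    (u v : V) :
    (G.deleteEdges {s(u, v)}).Reachable x y ∨ (G.deleteEdges {s(u, v)}).Reachable x u ∨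
      (G.deleteEdges {s(u, v)}).Reachable y u := by
  classical
  -- a path from `x` to `y` through `s(u, v)` would reach `u` from `x` or `y` without that edge
  by_contra! ⟨hxy, hxu, hyu⟩
  obtain ⟨p⟩ := h
  have hp := p.toPath.2.isTrail.not_mem_edges_of_not_reachable (x := v) (y := u)
    (by rwa [Sym2.eq_swap]) (by rwa [Sym2.eq_swap])
  rw [Sym2.eq_swap] at hp
  exact hp ((p.toPath : G.Walk x y).mem_edges_of_not_reachable_deleteEdges hxy)

lemma numComp_deleteEdges_singleton_le [Finite V] (G : SimpleGraph V) (e : Sym2 V) :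
    numComp (G.deleteEdges {e}) ≤ numComp G + 1 := by
  induction e with | _ u v =>
  set G' := G.deleteEdges {s(u, v)}
  let φ : G'.ConnectedComponent → G.ConnectedComponent :=
    ConnectedComponent.map (Hom.ofLE (deleteEdges_le _))
  have hinj : Set.InjOn φ {G'.connectedComponentMk u}ᶜ := by
    intro C₁ hC₁ C₂ hC₂ hφ
    induction C₁ using ConnectedComponent.ind with | _ x =>
    induction C₂ using ConnectedComponent.ind with | _ y =>
    simp only [Set.mem_compl_iff, Set.mem_singleton_iff, ConnectedComponent.eq] at hC₁ hC₂
    rcases (ConnectedComponent.eq.mp hφ).deleteEdges_singleton_or u v with h | h | h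
    · exact ConnectedComponent.sound h
    · exact absurd h hC₁
    · exact absurd h hC₂
  have hcompl := Set.ncard_sdiff_singleton_add_one (Set.mem_univ (G'.connectedComponentMk u))
    (Set.toFinite _)
  rw [← Set.compl_eq_univ_sdiff, Set.ncard_univ] at hcompl
  have := Set.ncard_le_ncard_of_injOn φ (fun _ _ ↦ Set.mem_univ _) hinj (Set.toFinite _)
  rw [Set.ncard_univ] at this
  unfold numComp
  omega

lemma numComp_deleteEdges_le [Finite V] (G : SimpleGraph V) {A : Set (Sym2 V)}
    (hA : A.Finite) : numComp (G.deleteEdges A) ≤ numComp G + A.ncard := by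
  induction A, hA using Set.Finite.induction_on with
  | empty => simp
  | @insert e A he hA ih =>
    rw [Set.ncard_insert_of_notMem he hA, ← Set.union_singleton, ← deleteEdges_deleteEdges]
    have := numComp_deleteEdges_singleton_le (G.deleteEdges A) e
    omega

lemma Preconnected.numComp_le_one {G : SimpleGraph V} (hG : G.Preconnected) : numComp G ≤ 1 :=
  have := hG.subsingleton_connectedComponent
  Finite.card_le_one_iff_subsingleton.mpr this

lemma numComp_le_card [Finite V] (G : SimpleGraph V) : numComp G ≤ Nat.card V :=
  Nat.card_le_card_of_surjective _ fun C ↦ C.exists_rep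

section Weight

variable [Fintype V] (G H : SimpleGraph V) [DecidableRel G.Adj] [DecidableRel H.Adj]

def vertexWeight (v : V) : ℤ :=
  1 + (if G.degree v = 2 then 1 else 0) + 2 * (if G.degree v = 1 then 1 else 0) +
    (G.degree v - H.degree v)

variable {G H}

lemma one_le_vertexWeight (hle : H ≤ G) (v : V) : 1 ≤ vertexWeight G H v := by
  have := degree_le_of_le (v := v) hle
  unfold vertexWeight
  split_ifs <;> omega

lemma four_sub_degree_le_vertexWeight {v : V} (hv : 0 < G.degree v) :
    4 - H.degree v ≤ vertexWeight G H v := by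
  unfold vertexWeight
  split_ifs <;> omega

lemma degree_lt_card_supp [DecidableEq H.ConnectedComponent] {C : H.ConnectedComponent} {v : V}
    (hv : H.connectedComponentMk v = C) :
    H.degree v < #{w | H.connectedComponentMk w = C} := by
  rw [← card_neighborFinset_eq_degree]
  refine card_lt_card ⟨fun w hw ↦ ?_, fun h ↦ ?_⟩
  · rw [mem_filter_univ, ← hv]
    exact ConnectedComponent.sound ((mem_neighborFinset _ _ _).mp hw).symm.reachable
  · exact H.irrefl ((mem_neighborFinset _ _ _).mp (h ((mem_filter_univ v).mpr hv)))

lemma four_le_sum_vertexWeight_supp [DecidableEq H.ConnectedComponent] (hle : H ≤ G)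
    (hdeg : ∀ v, 0 < G.degree v) (C : H.ConnectedComponent) :
    4 ≤ ∑ v with H.connectedComponentMk v = C, vertexWeight G H v := by
  set S := ({v | H.connectedComponentMk v = C} : Finset V)
  have hk : 0 < #S := by
    obtain ⟨v, hv⟩ := C.exists_rep
    exact card_pos.mpr ⟨v, (mem_filter_univ v).mpr hv⟩
  have hS₁ : (#S : ℤ) ≤ ∑ v ∈ S, vertexWeight G H v := by
    simpa using sum_le_sum fun v _ ↦ one_le_vertexWeight hle v
  have hS₂ : #S * (5 - #S : ℤ) ≤ ∑ v ∈ S, vertexWeight G H v := by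
    rw [← nsmul_eq_mul, ← sum_const]
    refine sum_le_sum fun v hv ↦ ?_
    have : H.degree v < #S := degree_lt_card_supp ((mem_filter_univ v).mp hv)
    have := four_sub_degree_le_vertexWeight (H := H) (hdeg v)
    omega
  rcases le_or_gt 4 #S with h | h
  · omega
  · nlinarith

lemma four_mul_numComp_le_sum_vertexWeight (hle : H ≤ G) (hdeg : ∀ v, 0 < G.degree v) :
    4 * (numComp H : ℤ) ≤ ∑ v, vertexWeight G H v := by
  classical
  rw [numComp, Nat.card_eq_fintype_card, ← sum_fiberwise univ H.connectedComponentMk]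
  simpa [mul_comm] using sum_le_sum (s := univ) fun C _ ↦ four_le_sum_vertexWeight_supp hle hdeg C

lemma sum_vertexWeight :
    ∑ v, vertexWeight G H v = Fintype.card V + #{v | G.degree v = 2} +
      2 * #{v | G.degree v = 1} + ∑ v, ((G.degree v : ℤ) - H.degree v) := by
  simp only [vertexWeight, sum_add_distrib, ← mul_sum, sum_boole, sum_const, card_univ]
  simp

end Weight

lemma sum_degree_sub_degree_deleteEdges [Fintype V] {G : SimpleGraph V} [DecidableRel G.Adj]
    {A : Set (Sym2 V)} [DecidableRel (G.deleteEdges A).Adj] (hA : A ⊆ G.edgeSet) :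
    ∑ v, ((G.degree v : ℤ) - (G.deleteEdges A).degree v) = 2 * A.ncard := by
  classical
  have hcard : #(G.deleteEdges A).edgeFinset + A.ncard = #G.edgeFinset := by
    simp only [← Set.ncard_coe_finset, coe_edgeFinset, edgeSet_deleteEdges]
    exact Set.ncard_sdiff_add_ncard_of_subset hA
  rw [sum_sub_distrib]
  simp only [← Nat.cast_sum, sum_degrees_eq_twice_card_edges]
  omega

lemma four_mul_numComp_deleteEdges_le [Fintype V] {G : SimpleGraph V} [DecidableRel G.Adj]
    (hdeg : ∀ v, 0 < G.degree v) {A : Set (Sym2 V)} (hA : A ⊆ G.edgeSet) :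
    4 * (numComp (G.deleteEdges A) : ℤ) ≤ Fintype.card V + #{v | G.degree v = 2} +
      2 * #{v | G.degree v = 1} + 2 * A.ncard := by
  classical
  rw [← sum_degree_sub_degree_deleteEdges hA, ← sum_vertexWeight]
  exact four_mul_numComp_le_sum_vertexWeight (deleteEdges_le A) hdeg

lemma ncard_setOf_ncard_neighborSet_eq [Fintype V] (G : SimpleGraph V) [DecidableRel G.Adj]
    (i : ℕ) : {v | (G.neighborSet v).ncard = i}.ncard = #{v | G.degree v = i} := by
  rw [← Set.ncard_coe_finset, coe_filter_univ]
  simp only [Set.ncard_eq_toFinset_card', Set.toFinset_card, card_neighborSet_eq_degree]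

lemma two_mul_yVal_le [Finite V] {G : SimpleGraph V} (hG : ∀ v, ¬ G.IsIsolated v)
    {A : Set (Sym2 V)} (hA : A ⊆ G.edgeSet) :
    2 * yVal G A ≤ Nat.card V + {v | (G.neighborSet v).ncard = 2}.ncard +
      2 * {v | (G.neighborSet v).ncard = 1}.ncard - 2 := by
  classical
  have := Fintype.ofFinite V
  have := four_mul_numComp_deleteEdges_le (fun v ↦ (G.degree_pos v).mpr (hG v)) hA
  rw [yVal, Nat.card_eq_fintype_card, ncard_setOf_ncard_neighborSet_eq,
    ncard_setOf_ncard_neighborSet_eq]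
  omega

lemma yVal_le_card [Finite V] {G : SimpleGraph V} (hG : G.Preconnected) {A : Set (Sym2 V)}
    (hA : A.Finite) : yVal G A ≤ Nat.card V := by
  have := numComp_deleteEdges_le G hA
  have := hG.numComp_le_one
  have := numComp_le_card (G.deleteEdges A)
  rw [yVal]
  omega

lemma exists_yVal_eq_yMax [Finite V] (G : SimpleGraph V) : ∃ A ⊆ G.edgeSet, yVal G A = yMax G :=
  Int.csSup_mem (s := {y | ∃ A ⊆ G.edgeSet, yVal G A = y}) ⟨_, ∅, Set.empty_subset _, rfl⟩
    ((Set.toFinite G.edgeSet).finite_subsets.image (yVal G)).bddAbove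

end SimpleGraph

/-- If `G` is a connected finite simple graph of order `n ≥ 2`, then
`2 y_G ≤ n + n₂(G) + 2 n₁(G) - 2` and `y_G ≤ n`, where `n_i(G)` is the number of
vertices of degree `i` in `G`. -/
theorem yMax_le_of_connected_order_ge_two {V : Type*} [Finite V]
    (G : SimpleGraph V) (hG : G.Connected)
    (n : ℕ) (hn : Nat.card V = n) (h2 : 2 ≤ n) :
    2 * yMax G ≤ (n : ℤ) + ({v : V | (G.neighborSet v).ncard = 2}.ncard : ℤ)
        + 2 * ({v : V | (G.neighborSet v).ncard = 1}.ncard : ℤ) - 2 ∧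
    yMax G ≤ (n : ℤ) := by
  have : Nontrivial V := Finite.one_lt_card_iff_nontrivial.mp (by omega)
  obtain ⟨A, hA, hyA⟩ := exists_yVal_eq_yMax G
  rw [← hyA, ← hn]
  exact ⟨two_mul_yVal_le hG.preconnected.not_isIsolated hA,
    yVal_le_card hG.preconnected ((Set.toFinite _).subset hA)⟩
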